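/- arXiv:2107.05903 — 3 statements merged into one kernel-verified Lean document; each statement's English description precedes it below -/
import Mathlib

section
/- Let (P, ≤) be a poset, (Y, ≤) a complete inf-semilattice, X ⊂ P a subset, and Φ : P → Y an order-preserving map. Suppose the greatest lower bound ⋀_{x∈X} x exists in P, and there is a sequence (x_n) in X whose infimum exists in P and equals ⋀_{x∈X} x, such that the nonincreasing sequence x'_n = ⋀_{k≤n} x_k satisfies ⋀_n Φ(x'_n) ≤ Φ(⋀_{x∈X} x). Then ⋀_{x∈X} Φ(x) = Φ(⋀_{x∈X} x) holds if and only if X is Φ-inf-directed, i.e. for every finite subset X̃ ⊂ X one has ⋀_{x∈X} Φ(x) ≤ Φ(⋀_{x∈X̃} x). -/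
/-!
The inequality `Φ (⋀ X) ≤ ⋀ Φ '' X` always holds by monotonicity, and equality forces
inf-directedness because `⋀ X` lies below every finite infimum of elements of `X`. Conversely,
the partial infima `x' n` are infima of finite subsets of `X`, so inf-directedness gives
`⋀ Φ '' X ≤ ⋀ₙ Φ (x' n)`, and the hypothesis on the sequence closes the chain at `Φ (⋀ X)`.
-/

open Set

lemma setOf_exists_le_eq_coe_image_Iic {P : Type*} [DecidableEq P] (x : ℕ → P) (n : ℕ) :
    {y | ∃ k ≤ n, y = x k} = ((Finset.Iic n).image x : Set P) := by
  ext y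
  simp [eq_comm]

lemma sInf_image_le_sInf_range_partialGLB {P Y : Type*} [Preorder P] [CompleteSemilatticeInf Y]
    {X : Set P} {Φ : P → Y}
    (hdir : ∀ F : Finset P, (F : Set P).Nonempty → ↑F ⊆ X →
      ∀ m : P, IsGLB (F : Set P) m → sInf (Φ '' X) ≤ Φ m)
    {x x' : ℕ → P} (hxX : ∀ n, x n ∈ X) (hx' : ∀ n, IsGLB {y | ∃ k ≤ n, y = x k} (x' n)) :
    sInf (Φ '' X) ≤ sInf (range fun n => Φ (x' n)) := by
  classical
  refine le_sInf (forall_mem_range.2 fun n => hdir ((Finset.Iic n).image x) ?_ ?_ (x' n) ?_)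
  · exact ⟨x 0, Finset.mem_image_of_mem x (Finset.mem_Iic.2 n.zero_le)⟩
  · rw [Finset.coe_image]
    exact image_subset_iff.2 fun k _ => hxX k
  · rw [← setOf_exists_le_eq_coe_image_Iic]
    exact hx' n

theorem minimization_interchange_general {P Y : Type*} [PartialOrder P] [CompleteSemilatticeInf Y]
    (X : Set P) (Φ : P → Y) (hΦ : Monotone Φ)
    (xstar : P) (hglb : IsGLB X xstar)
    (x : ℕ → P) (hxX : ∀ n, x n ∈ X)
    (x' : ℕ → P) (hx' : ∀ n, IsGLB {y | ∃ k ≤ n, y = x k} (x' n))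
    (hFatou : sInf (Set.range fun n => Φ (x' n)) ≤ Φ xstar) :
    sInf (Φ '' X) = Φ xstar ↔
      ∀ F : Finset P, (F : Set P).Nonempty → ↑F ⊆ X →
        ∀ m : P, IsGLB (F : Set P) m → sInf (Φ '' X) ≤ Φ m := by
  constructor
  · intro h F _ hFX m hm
    exact h ▸ hΦ (hm.mono hglb hFX)
  · intro hdir
    refine le_antisymm ?_ (le_sInf (hΦ.mem_lowerBounds_image hglb.1))
    calc sInf (Φ '' X) ≤ sInf (range fun n => Φ (x' n)) :=
          sInf_image_le_sInf_range_partialGLB hdir hxX hx'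
      _ ≤ Φ xstar := hFatou

/-- Minimization Interchange Theorem on posets. -/
theorem minimization_interchange {P Y : Type*} [PartialOrder P] [CompleteSemilatticeInf Y]
    (X : Set P) (Φ : P → Y) (hΦ : Monotone Φ)
    (xstar : P) (hglb : IsGLB X xstar)
    (x : ℕ → P) (hxX : ∀ n, x n ∈ X)
    (hseq : IsGLB (Set.range x) xstar)
    (x' : ℕ → P) (hx' : ∀ n, IsGLB {y | ∃ k ≤ n, y = x k} (x' n))
    (hFatou : sInf (Set.range fun n => Φ (x' n)) ≤ Φ xstar) :
    sInf (Φ '' X) = Φ xstar ↔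
      ∀ F : Finset P, (F : Set P).Nonempty → ↑F ⊆ X →
        ∀ m : P, IsGLB (F : Set P) m → sInf (Φ '' X) ≤ Φ m :=
  minimization_interchange_general X Φ hΦ xstar hglb x hxX x' hx' hFatou
end

section
/- Let (Ω, F, μ) be a σ-finite measure space and X a subset of L¹_⊕(Ω, F, μ; ℝ̄) (equivalence classes of measurable extended-real functions with integrable positive part). Then the essential infimum ess inf_{x∈X} x belongs to L¹_⊕, and the equality inf_{x∈X} ∫_Ω x dμ = ∫_Ω (ess inf_{x∈X} x) dμ holds if and only if X is integrably inf-directed, i.e. for every finite family x₁,…,x_n in X, inf_{x∈X} ∫_Ω x dμ ≤ ∫_Ω min_{1≤i≤n} x_i dμ. -/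
/-!
Up to a null set, the essential infimum `g` of `X` is the pointwise infimum of a sequence
`D₀, D₁, …` in `X`, hence the decreasing limit of the finite minima `min (D₀, …, Dₙ)`. As `D₀` has
an integrable positive part, monotone convergence (downwards for positive parts, upwards for
negative parts) gives `∫ g = infₙ ∫ min (D₀, …, Dₙ)`, which is `≥ inf_X ∫` when `X` is integrably
inf-directed. Everything else is monotonicity of the integral.
-/

open MeasureTheory Filter Topology ENNReal

noncomputable section

/-- The nonnegative part of an extended real number, as an element of `ℝ≥0∞`. -/
def EReal.posE (x : EReal) : ℝ≥0∞ := if x = ⊤ then ⊤ else ENNReal.ofReal x.toReal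

variable {Ω : Type*} [MeasurableSpace Ω]

/-- The extended Lebesgue integral of an extended-real-valued function:
`∫ f₊ dμ − ∫ f₋ dμ` (meaningful when one of the two parts is finite). -/
def extInt (μ : Measure Ω) (f : Ω → EReal) : EReal :=
  ((∫⁻ ω, (f ω).posE ∂μ : ℝ≥0∞) : EReal) - ((∫⁻ ω, (-(f ω)).posE ∂μ : ℝ≥0∞) : EReal)

/-- The outer integral: infimum of integrals of real-valued integrable a.e. majorants. -/
def outerInt (μ : Measure Ω) (f : Ω → EReal) : EReal :=
  sInf { y : EReal | ∃ ψ : Ω → ℝ, Integrable ψ μ ∧ (∀ᵐ ω ∂μ, f ω ≤ (ψ ω : EReal)) ∧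
    y = ((∫ ω, ψ ω ∂μ : ℝ) : EReal) }

/-- The inner integral: supremum of integrals of real-valued integrable a.e. minorants. -/
def innerInt (μ : Measure Ω) (f : Ω → EReal) : EReal :=
  sSup { y : EReal | ∃ ψ : Ω → ℝ, Integrable ψ μ ∧ (∀ᵐ ω ∂μ, (ψ ω : EReal) ≤ f ω) ∧
    y = ((∫ ω, ψ ω ∂μ : ℝ) : EReal) }

/-- Extended addition on `ℝ̄` for which `+∞` is absorbing. -/
def upperAdd (a b : EReal) : EReal := if a = ⊤ ∨ b = ⊤ then ⊤ else a + b

namespace EReal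

lemma toENNReal_iInf {ι : Sort*} (x : ι → EReal) :
    (⨅ i, x i).toENNReal = ⨅ i, (x i).toENNReal :=
  Monotone.map_iInf_of_continuousAt continuous_toENNReal.continuousAt
    (fun _ _ => toENNReal_le_toENNReal) toENNReal_top

lemma toENNReal_neg_iInf {ι : Sort*} (x : ι → EReal) :
    (-⨅ i, x i).toENNReal = ⨆ i, (-x i).toENNReal :=
  Antitone.map_iInf_of_continuousAt (f := fun y : EReal => (-y).toENNReal)
    (continuous_toENNReal.comp continuous_neg).continuousAt
    (fun _ _ h => toENNReal_le_toENNReal (neg_le_neg_iff.2 h)) (by simp)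

lemma iInf_coe_sub_coe_le {a b : ℕ → ℝ≥0∞} (ha : Antitone a) (hb : Monotone b)
    (ha_top : ⨅ n, a n ≠ ∞) :
    ⨅ n, ((a n : EReal) - b n) ≤ ((⨅ n, a n : ℝ≥0∞) : EReal) - (⨆ n, b n : ℝ≥0∞) := by
  have hcont : ContinuousAt (fun p : EReal × EReal => p.1 + p.2)
      (((⨅ n, a n : ℝ≥0∞) : EReal), -((⨆ n, b n : ℝ≥0∞) : EReal)) :=
    continuousAt_add (Or.inl (by simpa using ha_top)) (Or.inr (by simp))
  have hlim : Tendsto (fun n => (a n : EReal) - b n) atTop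
      (𝓝 (((⨅ n, a n : ℝ≥0∞) : EReal) - (⨆ n, b n : ℝ≥0∞))) :=
    hcont.tendsto.comp <|
      (continuous_coe_ennreal_ereal.tendsto _ |>.comp (tendsto_atTop_iInf ha)).prodMk_nhds
        ((continuous_neg.tendsto _).comp
          (continuous_coe_ennreal_ereal.tendsto _ |>.comp (tendsto_atTop_iSup hb)))
  exact ge_of_tendsto hlim (Eventually.of_forall fun n => iInf_le _ n)

end EReal

-- For each rational `q`, the measurable union of the sublevel sets `{f < q}`, `f ∈ X`, is already
-- the union of countably many of them; a rational strictly between `f ω` and `⨅ g ∈ Y, g ω`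
-- would put `ω` in one of these, below `⨅ g ∈ Y, g ω`.
lemma exists_countable_subset_ae_biInf_le (μ : Measure Ω) [SFinite μ] {X : Set (Ω → EReal)}
    (hX : ∀ f ∈ X, Measurable f) :
    ∃ Y ⊆ X, Y.Countable ∧ ∀ f ∈ X, (fun ω => ⨅ g ∈ Y, g ω) ≤ᵐ[μ] f := by
  have hC (q : ℚ) :
      ∀ s ∈ (fun f : Ω → EReal => {ω | f ω < ((q : ℝ) : EReal)}) '' X, MeasurableSet s := by
    rintro _ ⟨f, hf, rfl⟩
    exact measurableSet_lt (hX f hf) measurable_const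
  choose D hDC hD_countable hD using
    fun q => Measure.exists_ae_subset_biUnion_countable μ (hC q)
  choose! pick hpickX hpick using fun q s (hs : s ∈ D q) => hDC q hs
  refine ⟨⋃ q, pick q '' D q, Set.iUnion_subset fun q => Set.image_subset_iff.2 fun s hs =>
    hpickX q s hs, Set.countable_iUnion fun q => (hD_countable q).image _, fun f hf => ?_⟩
  filter_upwards [ae_all_iff.2 fun q => hD q _ ⟨f, hf, rfl⟩] with ω hω
  by_contra! hlt
  obtain ⟨q, hfq, hqw⟩ := EReal.exists_rat_btwn_of_lt hlt
  obtain ⟨s, hs, hωs⟩ := hω q hfq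
  have hpick_mem : pick q s ∈ ⋃ q, pick q '' D q := Set.mem_iUnion.2 ⟨q, s, hs, rfl⟩
  have hpick_lt : pick q s ω < ((q : ℝ) : EReal) := by rw [← hpick q s hs] at hωs; exact hωs
  exact (hqw.trans_le (biInf_le (fun g => g ω) hpick_mem)).not_gt hpick_lt

lemma exists_seq_ae_iInf_le (μ : Measure Ω) [SFinite μ] {X : Set (Ω → EReal)}
    (hX : ∀ f ∈ X, Measurable f) (hX_ne : X.Nonempty) :
    ∃ D : ℕ → Ω → EReal, (∀ n, D n ∈ X) ∧ ∀ f ∈ X, (fun ω => ⨅ n, D n ω) ≤ᵐ[μ] f := by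
  obtain ⟨Y, hYX, hY_countable, hY⟩ := exists_countable_subset_ae_biInf_le μ hX
  obtain ⟨f₀, hf₀⟩ := hX_ne
  obtain ⟨D, hD⟩ := (hY_countable.insert f₀).exists_eq_range (Set.insert_nonempty f₀ Y)
  refine ⟨D, fun n => Set.insert_subset hf₀ hYX (hD ▸ Set.mem_range_self (f := D) n),
    fun f hf => ?_⟩
  filter_upwards [hY f hf] with ω hω
  refine le_trans (le_iInf₂ fun g hg => ?_) hω
  obtain ⟨n, rfl⟩ : g ∈ Set.range D := hD ▸ Set.mem_insert_of_mem f₀ hg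
  exact iInf_le _ n

section extInt

variable {μ : Measure Ω}

-- `EReal.posE` is Mathlib's `EReal.toENNReal`, whose API we use from here on.
lemma extInt_eq_toENNReal (f : Ω → EReal) :
    extInt μ f =
      ((∫⁻ ω, (f ω).toENNReal ∂μ : ℝ≥0∞) : EReal) - (∫⁻ ω, (-f ω).toENNReal ∂μ : ℝ≥0∞) :=
  rfl

lemma extInt_mono_ae {f g : Ω → EReal} (h : f ≤ᵐ[μ] g) : extInt μ f ≤ extInt μ g := by
  refine EReal.sub_le_sub ?_ ?_ <;> refine EReal.coe_ennreal_le_coe_ennreal_iff.2 ?_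
  · exact lintegral_mono_ae (h.mono fun ω hω => EReal.toENNReal_le_toENNReal hω)
  · exact lintegral_mono_ae <|
      h.mono fun ω hω => EReal.toENNReal_le_toENNReal (EReal.neg_le_neg_iff.2 hω)

lemma extInt_iInf_of_antitone {f : ℕ → Ω → EReal} (hf : ∀ n, Measurable (f n))
    (hf_anti : Antitone f) (hf₀ : ∫⁻ ω, (f 0 ω).toENNReal ∂μ ≠ ∞) :
    extInt μ (fun ω => ⨅ n, f n ω) = ⨅ n, extInt μ (f n) := by
  refine le_antisymm (le_iInf fun n => extInt_mono_ae (ae_of_all _ fun ω => iInf_le _ n)) ?_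
  have hpos : ∫⁻ ω, (⨅ n, f n ω).toENNReal ∂μ = ⨅ n, ∫⁻ ω, (f n ω).toENNReal ∂μ := by
    simp_rw [EReal.toENNReal_iInf]
    exact lintegral_iInf (fun n => (hf n).ereal_toENNReal)
      (fun _ _ h ω => EReal.toENNReal_le_toENNReal (hf_anti h ω)) hf₀
  have hneg : ∫⁻ ω, (-⨅ n, f n ω).toENNReal ∂μ = ⨆ n, ∫⁻ ω, (-f n ω).toENNReal ∂μ := by
    simp_rw [EReal.toENNReal_neg_iInf]
    exact lintegral_iSup (fun n => (hf n).neg.ereal_toENNReal)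
      (fun _ _ h ω => EReal.toENNReal_le_toENNReal (EReal.neg_le_neg_iff.2 (hf_anti h ω)))
  rw [extInt_eq_toENNReal, hpos, hneg]
  exact EReal.iInf_coe_sub_coe_le
    (fun _ _ h => lintegral_mono fun ω => EReal.toENNReal_le_toENNReal (hf_anti h ω))
    (fun _ _ h => lintegral_mono fun ω =>
      EReal.toENNReal_le_toENNReal (EReal.neg_le_neg_iff.2 (hf_anti h ω)))
    (ne_top_of_le_ne_top hf₀ (iInf_le _ 0))

lemma extInt_iInf_eq_iInf_extInt_inf' {D : ℕ → Ω → EReal}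
    (hD : ∀ n, Measurable (D n)) (hD₀ : ∫⁻ ω, (D 0 ω).toENNReal ∂μ ≠ ∞) :
    extInt μ (fun ω => ⨅ n, D n ω) =
      ⨅ n, extInt μ (fun ω => (Finset.range (n + 1)).inf' Finset.nonempty_range_add_one
        fun k => D k ω) := by
  have hinf (ω : Ω) : ⨅ n, D n ω =
      ⨅ n, (Finset.range (n + 1)).inf' Finset.nonempty_range_add_one fun k => D k ω :=
    le_antisymm (le_iInf fun n => Finset.le_inf' _ _ fun k _ => iInf_le _ k)
      (le_iInf fun n => (iInf_le _ n).trans (Finset.inf'_le _ (Finset.self_mem_range_succ n)))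
  have hmeas (n : ℕ) : Measurable fun ω =>
      (Finset.range (n + 1)).inf' Finset.nonempty_range_add_one fun k => D k ω := by
    simp_rw [← Finset.inf'_apply]
    exact Finset.inf'_induction _ _ (fun _ hf _ hg => hf.inf hg) fun k _ => hD k
  simp_rw [hinf]
  refine extInt_iInf_of_antitone hmeas ?_ (by simpa using hD₀)
  intro m n hmn ω
  exact Finset.inf'_mono _ (Finset.range_subset_range.2 (Nat.succ_le_succ hmn)) _

end extInt

theorem interchange_extInt_general (μ : Measure Ω) [SigmaFinite μ]
    (X : Set (Ω → EReal)) (hXne : X.Nonempty)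
    (hmeas : ∀ f ∈ X, Measurable f)
    (hL1 : ∀ f ∈ X, (∫⁻ ω, (f ω).posE ∂μ) < ⊤)
    (g : Ω → EReal)
    (hlb : ∀ f ∈ X, g ≤ᵐ[μ] f)
    (hglb : ∀ h : Ω → EReal, Measurable h → (∀ f ∈ X, h ≤ᵐ[μ] f) → h ≤ᵐ[μ] g) :
    (∫⁻ ω, (g ω).posE ∂μ) < ⊤ ∧
    ((⨅ f ∈ X, extInt μ f) = extInt μ g ↔
      ∀ (s : Finset (Ω → EReal)) (hs : s.Nonempty), ↑s ⊆ X →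
        (⨅ f ∈ X, extInt μ f) ≤ extInt μ fun ω => s.inf' hs fun f => f ω) := by
  classical
  obtain ⟨f₀, hf₀⟩ := hXne
  have hg_le : extInt μ g ≤ ⨅ f ∈ X, extInt μ f :=
    le_iInf₂ fun f hf => extInt_mono_ae (hlb f hf)
  have hg_pos : ∫⁻ ω, (g ω).toENNReal ∂μ ≤ ∫⁻ ω, (f₀ ω).toENNReal ∂μ :=
    lintegral_mono_ae ((hlb f₀ hf₀).mono fun ω hω => EReal.toENNReal_le_toENNReal hω)
  refine ⟨hg_pos.trans_lt (hL1 f₀ hf₀), fun h_eq s hs hsX => ?_, fun h_dir => le_antisymm ?_ hg_le⟩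
  · have hg_s : g ≤ᵐ[μ] fun ω => s.inf' hs fun f => f ω := by
      filter_upwards [(eventually_all_finset s).2 fun f hf => hlb f (hsX hf)] with ω hω
      exact Finset.le_inf' hs _ hω
    exact h_eq ▸ extInt_mono_ae hg_s
  obtain ⟨D, hDX, hD⟩ := exists_seq_ae_iInf_le μ hmeas ⟨f₀, hf₀⟩
  calc ⨅ f ∈ X, extInt μ f
      ≤ ⨅ n, extInt μ (fun ω => (Finset.range (n + 1)).inf' Finset.nonempty_range_add_one
          fun k => D k ω) := le_iInf fun n => by
        simpa [Finset.inf'_image] using h_dir _ (Finset.nonempty_range_add_one.image D)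
          (by simpa [Set.subset_def] using fun k _ => hDX k)
    _ = extInt μ (fun ω => ⨅ n, D n ω) :=
        (extInt_iInf_eq_iInf_extInt_inf' (fun n => hmeas _ (hDX n)) (hL1 _ (hDX 0)).ne).symm
    _ ≤ extInt μ g := extInt_mono_ae (hglb _ (Measurable.iInf fun n => hmeas _ (hDX n)) hD)

/-- Interchange between minimization and the extended Lebesgue integral on `L¹_⊕`. -/
theorem interchange_extInt (μ : Measure Ω) [SigmaFinite μ]
    (X : Set (Ω → EReal)) (hXne : X.Nonempty)
    (hmeas : ∀ f ∈ X, Measurable f)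
    (hL1 : ∀ f ∈ X, (∫⁻ ω, (f ω).posE ∂μ) < ⊤)
    (g : Ω → EReal) (hg : Measurable g)
    (hlb : ∀ f ∈ X, g ≤ᵐ[μ] f)
    (hglb : ∀ h : Ω → EReal, Measurable h → (∀ f ∈ X, h ≤ᵐ[μ] f) → h ≤ᵐ[μ] g) :
    (∫⁻ ω, (g ω).posE ∂μ) < ⊤ ∧
    ((⨅ f ∈ X, extInt μ f) = extInt μ g ↔
      ∀ (s : Finset (Ω → EReal)) (hs : s.Nonempty), ↑s ⊆ X →
        (⨅ f ∈ X, extInt μ f) ≤ extInt μ fun ω => s.inf' hs fun f => f ω) :=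
  interchange_extInt_general μ X hXne hmeas hL1 g hlb hglb

end
end

section
/- Let (Ω, F, μ) be a σ-finite measure space. For every measurable function f : Ω → ℝ̄, the outer integral ∫*_Ω f dμ := inf{ ∫_Ω ψ dμ : ψ ∈ L¹(Ω; ℝ), f ≤ ψ μ-a.e. } satisfies ∫*_Ω f dμ = ∫_Ω f₊ dμ ⊕' (−∫_Ω f₋ dμ), where ⊕' is the extended addition on ℝ̄ for which +∞ is absorbing (so (+∞) ⊕' (−∞) = +∞). In particular, when f is semi-integrable (∫f₊ dμ < ∞ or ∫f₋ dμ < ∞), the outer integral coincides with the extended Lebesgue integral. -/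
open MeasureTheory Filter Topology ENNReal

noncomputable section

variable {Ω : Type*} [MeasurableSpace Ω]

/-!
An integrable majorant `ψ ≥ f` satisfies `ψ₊ ≥ f₊` and `ψ₋ ≤ f₋`, so its integral is at least
`∫ f₊ - ∫ f₋`; in particular no majorant exists when `∫ f₊ = ∞`. Conversely, when `∫ f₊ < ∞`,
σ-finiteness gives measurable `gₙ ≤ f₋` with finite integrals increasing to `∫ f₋`, and
`f₊ - gₙ` are integrable majorants whose integrals decrease to `∫ f₊ - ∫ f₋`.
-/

namespace EReal

lemma le_toReal_toENNReal_sub {x : EReal} (hx : x ≠ ⊤) {t : ℝ≥0∞}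
    (ht : t ≤ (-x).toENNReal) : x ≤ ((x.toENNReal.toReal - t.toReal : ℝ) : EReal) := by
  induction x using EReal.rec with
  | bot => exact bot_le
  | top => exact absurd rfl hx
  | coe r =>
    rw [← coe_neg, real_coe_toENNReal] at ht
    have ht' : t.toReal ≤ max (-r) 0 := by
      rw [← ENNReal.toReal_ofReal']; exact ENNReal.toReal_mono ENNReal.ofReal_ne_top ht
    rw [real_coe_toENNReal, ENNReal.toReal_ofReal', EReal.coe_le_coe_iff]
    linarith [max_zero_sub_max_neg_zero_eq_self r]

lemma coe_toReal_sub_toReal {a b : ℝ≥0∞} (ha : a ≠ ⊤) (hb : b ≠ ⊤) :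
    ((a.toReal - b.toReal : ℝ) : EReal) = (a : EReal) - b := by
  rw [coe_sub, coe_ennreal_toReal ha, coe_ennreal_toReal hb]

lemma tendsto_const_sub_coe_ennreal {α : Type*} {l : Filter α} {a : EReal}
    {u : α → ℝ≥0∞} {b : ℝ≥0∞} (h : a ≠ ⊤ ∨ b ≠ ⊤) (hu : Tendsto u l (𝓝 b)) :
    Tendsto (fun n => a - (u n : EReal)) l (𝓝 (a - b)) := by
  have hneg : Tendsto (fun n => -(u n : EReal)) l (𝓝 (-(b : EReal))) :=
    (continuous_neg.tendsto _).comp ((continuous_coe_ennreal_ereal.tendsto _).comp hu)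
  refine (EReal.continuousAt_add ?_ (Or.inr ?_)).tendsto.comp
    (tendsto_const_nhds.prodMk_nhds hneg)
  · simpa using h
  · simp

end EReal

namespace MeasureTheory

variable {α : Type*} [MeasurableSpace α] {μ : Measure α}

lemma exists_seq_le_lintegral_ne_top_tendsto [SigmaFinite μ] {h : α → ℝ≥0∞}
    (hh : Measurable h) :
    ∃ g : ℕ → α → ℝ≥0∞, (∀ n, Measurable (g n)) ∧ (∀ n, g n ≤ h) ∧
      (∀ n, ∫⁻ x, g n x ∂μ ≠ ⊤) ∧
      Tendsto (fun n => ∫⁻ x, g n x ∂μ) atTop (𝓝 (∫⁻ x, h x ∂μ)) := by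
  -- `g n := min h (n * w)` for a strictly positive `w` of finite integral
  obtain ⟨w, hw_pos, hw_meas, hw_int⟩ := exists_pos_lintegral_lt_of_sigmaFinite μ one_ne_zero
  have hw_meas' : Measurable fun x => (w x : ℝ≥0∞) := hw_meas.coe_nnreal_ennreal
  refine ⟨fun n x => min (h x) (n * w x), fun n => hh.min (hw_meas'.const_mul _),
    fun n x => min_le_left _ _, fun n => ?_, ?_⟩
  · refine ne_top_of_le_ne_top ?_ (lintegral_mono fun x => min_le_right _ _)
    rw [lintegral_const_mul _ hw_meas']
    exact ENNReal.mul_ne_top (ENNReal.natCast_ne_top n) (hw_int.trans ENNReal.one_lt_top).ne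
  refine lintegral_tendsto_of_tendsto_of_monotone
    (fun n => (hh.min (hw_meas'.const_mul _)).aemeasurable)
    (ae_of_all _ fun x m n hmn => min_le_min le_rfl (by gcongr))
    (ae_of_all _ fun x => ?_)
  have hnw : Tendsto (fun n : ℕ => (n : ℝ≥0∞) * w x) atTop (𝓝 ⊤) := by
    have := ENNReal.Tendsto.mul_const (b := (w x : ℝ≥0∞)) ENNReal.tendsto_nat_nhds_top
      (Or.inr ENNReal.coe_ne_top)
    rwa [ENNReal.top_mul (ENNReal.coe_ne_zero.2 (hw_pos x).ne')] at this
  simpa using tendsto_const_nhds.min hnw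

end MeasureTheory

open EReal

variable {μ : Measure Ω} {f : Ω → EReal}

lemma sub_le_integral_of_ae_le {ψ : Ω → ℝ} (hψ : Integrable ψ μ)
    (hle : ∀ᵐ ω ∂μ, f ω ≤ ψ ω) :
    ((∫⁻ ω, (f ω).toENNReal ∂μ : ℝ≥0∞) : EReal) - (∫⁻ ω, (-(f ω)).toENNReal ∂μ : ℝ≥0∞)
      ≤ ∫ ω, ψ ω ∂μ := by
  have hpos : ∫⁻ ω, (f ω).toENNReal ∂μ ≤ ∫⁻ ω, ENNReal.ofReal (ψ ω) ∂μ :=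
    lintegral_mono_ae (hle.mono fun ω h => toENNReal_le_toENNReal h)
  have hneg : ∫⁻ ω, ENNReal.ofReal (-ψ ω) ∂μ ≤ ∫⁻ ω, (-(f ω)).toENNReal ∂μ :=
    lintegral_mono_ae (hle.mono fun ω h => by
      simpa using toENNReal_le_toENNReal (EReal.neg_le_neg_iff.2 h))
  have hneg_fin : ∫⁻ ω, ENNReal.ofReal (-ψ ω) ∂μ ≠ ⊤ := hψ.neg.lintegral_lt_top.ne
  rw [integral_eq_lintegral_pos_part_sub_lintegral_neg_part hψ,
    coe_toReal_sub_toReal hψ.lintegral_lt_top.ne hneg_fin]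
  exact EReal.sub_le_sub (coe_ennreal_le_coe_ennreal_iff.2 hpos)
    (coe_ennreal_le_coe_ennreal_iff.2 hneg)

lemma outerInt_eq_top (hA : ∫⁻ ω, (f ω).toENNReal ∂μ = ⊤) : outerInt μ f = ⊤ := by
  refine sInf_eq_top.2 ?_
  rintro _ ⟨ψ, hψ, hle, rfl⟩
  refine absurd ?_ hψ.lintegral_lt_top.not_ge
  exact hA ▸ lintegral_mono_ae (hle.mono fun ω h => toENNReal_le_toENNReal h)

lemma outerInt_le_sub_lintegral (hf : Measurable f) (hA : ∫⁻ ω, (f ω).toENNReal ∂μ ≠ ⊤)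
    {g : Ω → ℝ≥0∞} (hg : Measurable g) (hgf : ∀ ω, g ω ≤ (-(f ω)).toENNReal)
    (hgi : ∫⁻ ω, g ω ∂μ ≠ ⊤) :
    outerInt μ f ≤ ((∫⁻ ω, (f ω).toENNReal ∂μ : ℝ≥0∞) : EReal) - (∫⁻ ω, g ω ∂μ : ℝ≥0∞) := by
  have hpos_meas : Measurable fun ω => (f ω).toENNReal := hf.ereal_toENNReal
  have hpos := integrable_toReal_of_lintegral_ne_top hpos_meas.aemeasurable hA
  have hgint := integrable_toReal_of_lintegral_ne_top hg.aemeasurable hgi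
  have hmaj : ∀ᵐ ω ∂μ, f ω ≤ (((f ω).toENNReal.toReal - (g ω).toReal : ℝ) : EReal) := by
    filter_upwards [ae_lt_top hpos_meas hA] with ω hω
    exact le_toReal_toENNReal_sub (toENNReal_ne_top_iff.1 hω.ne) (hgf ω)
  calc outerInt μ f ≤ ((∫ ω, ((f ω).toENNReal.toReal - (g ω).toReal) ∂μ : ℝ) : EReal) :=
        sInf_le ⟨_, hpos.sub hgint, hmaj, rfl⟩
    _ = _ := by
      rw [integral_sub hpos hgint, integral_toReal hpos_meas.aemeasurable (ae_lt_top hpos_meas hA),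
        integral_toReal hg.aemeasurable (ae_lt_top hg hgi), coe_toReal_sub_toReal hA hgi]

lemma outerInt_eq_sub [SigmaFinite μ] (hf : Measurable f)
    (hA : ∫⁻ ω, (f ω).toENNReal ∂μ ≠ ⊤) :
    outerInt μ f =
      ((∫⁻ ω, (f ω).toENNReal ∂μ : ℝ≥0∞) : EReal) - (∫⁻ ω, (-(f ω)).toENNReal ∂μ : ℝ≥0∞) := by
  refine le_antisymm ?_ (le_sInf ?_)
  · obtain ⟨g, hg, hgf, hgi, hlim⟩ :=
      exists_seq_le_lintegral_ne_top_tendsto (μ := μ) hf.neg.ereal_toENNReal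
    exact ge_of_tendsto' (tendsto_const_sub_coe_ennreal (Or.inl (by simpa using hA)) hlim)
      fun n => outerInt_le_sub_lintegral hf hA (hg n) (hgf n) (hgi n)
  · rintro _ ⟨ψ, hψ, hle, rfl⟩
    exact sub_le_integral_of_ae_le hψ hle

lemma upperAdd_neg_eq_sub {a b : ℝ≥0∞} (h : a ≠ ⊤ ∨ b ≠ ⊤) :
    upperAdd a (-(b : EReal)) = (a : EReal) - b := by
  have hb : -(b : EReal) ≠ ⊤ := fun hb => coe_ennreal_ne_bot b (neg_eq_top_iff.1 hb)
  rcases eq_or_ne a ⊤ with rfl | ha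
  · rw [← coe_ennreal_toReal (h.resolve_left (not_not_intro rfl))]
    simp [upperAdd]
  · rw [upperAdd, if_neg (by simp [ha, hb]), sub_eq_add_neg]

/-- The outer integral equals `∫f₊ ⊕' (−∫f₋)` where `⊕'` is the `+∞`-absorbing
addition; in particular it coincides with the extended Lebesgue integral on
semi-integrable functions. -/
theorem outerInt_eq (μ : Measure Ω) [SigmaFinite μ]
    (f : Ω → EReal) (hf : Measurable f) :
    outerInt μ f =
      upperAdd ((∫⁻ ω, (f ω).posE ∂μ : ℝ≥0∞) : EReal)
        (-((∫⁻ ω, (-(f ω)).posE ∂μ : ℝ≥0∞) : EReal)) ∧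
    (((∫⁻ ω, (f ω).posE ∂μ) < ⊤ ∨ (∫⁻ ω, (-(f ω)).posE ∂μ) < ⊤) →
      outerInt μ f = extInt μ f) := by
  have hposE : EReal.posE = EReal.toENNReal := rfl
  simp only [extInt, hposE]
  have hmain : outerInt μ f = upperAdd (∫⁻ ω, (f ω).toENNReal ∂μ : ℝ≥0∞)
      (-((∫⁻ ω, (-(f ω)).toENNReal ∂μ : ℝ≥0∞) : EReal)) := by
    rcases eq_or_ne (∫⁻ ω, (f ω).toENNReal ∂μ) ⊤ with hA | hA
    · rw [outerInt_eq_top hA, upperAdd, if_pos (Or.inl (by rw [hA]; rfl))]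
    · rw [outerInt_eq_sub hf hA, upperAdd_neg_eq_sub (Or.inl hA)]
  exact ⟨hmain, fun hfin => hmain.trans (upperAdd_neg_eq_sub (hfin.imp ne_of_lt ne_of_lt))⟩

end
end
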